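/- If, in addition, ℓ : F × Y → ℝ is L-Lipschitz in its first argument, then for every input x ∈ X and label y ∈ Y, the loss gap between the global-parameter predictor and the prediction-averaged ensemble satisfies |ℓ(f(θ_g)(x), y) − ℓ(Σ_{a=1}^n γ_a f(θ_a)(x), y)| ≤ L·M·Σ_{a=1}^n γ_a ‖θ_a − θ̄‖². -/

import Mathlib

/-!
Expand `f(·)(x)` to first order at `θ̄`: the affine parts of `f(θ_g)(x)` and of `Σ_a γ_a f(θ_a)(x)`
coincide because `θ_g - θ̄ = Σ_a γ_a (θ_a - θ̄)`, so the prediction gap is a difference of Taylor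
remainders. Each remainder is at most `M/2 · ‖· - θ̄‖²`, and Jensen's inequality for `‖·‖²` bounds
`‖θ_g - θ̄‖²` by `Σ_a γ_a ‖θ_a - θ̄‖²`; the Lipschitz bound on `ℓ` then transfers the gap to the loss.
-/

open Finset

section

open Set

variable {E F : Type*} [NormedAddCommGroup E] [NormedSpace ℝ E]
  [NormedAddCommGroup F] [NormedSpace ℝ F]

theorem norm_sum_smul_sub_sq_le {ι : Type*} (s : Finset ι) {w : ι → ℝ} (p : ι → E) (c : E)
    (hw₀ : ∀ i ∈ s, 0 ≤ w i) (hw₁ : ∑ i ∈ s, w i = 1) :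
    ‖∑ i ∈ s, w i • p i - c‖ ^ 2 ≤ ∑ i ∈ s, w i * ‖p i - c‖ ^ 2 := by
  have hcenter : ∑ i ∈ s, w i • (p i - c) = ∑ i ∈ s, w i • p i - c := by
    simp only [smul_sub, sum_sub_distrib, ← sum_smul, hw₁, one_smul]
  have hconvex : ConvexOn ℝ univ (fun v : E => ‖v‖ ^ 2) :=
    (convexOn_norm convex_univ).pow (fun v _ => norm_nonneg v) 2
  simpa [hcenter] using hconvex.map_sum_le hw₀ hw₁ (fun i _ => mem_univ (p i - c))

theorem Convex.norm_sub_sub_fderiv_le_of_lipschitz_fderiv {U : Set E} (hU : Convex ℝ U)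
    {f : E → F} (hd : ∀ u ∈ U, DifferentiableAt ℝ f u) {M : ℝ}
    (hlip : ∀ u ∈ U, ∀ v ∈ U, ‖fderiv ℝ f u - fderiv ℝ f v‖ ≤ M * ‖u - v‖)
    {x y : E} (hx : x ∈ U) (hy : y ∈ U) :
    ‖f y - f x - fderiv ℝ f x (y - x)‖ ≤ M / 2 * ‖y - x‖ ^ 2 := by
  set v := y - x
  set T := fderiv ℝ f x
  have hseg : ∀ t ∈ Icc (0 : ℝ) 1, x + t • v ∈ U := fun t ht => hU.add_smul_sub_mem hx hy ht
  -- Fence the first-order remainder `g t` at `x + t • v` by `M/2 ‖v‖² t²`; at `t = 1` it is the goal.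
  set g : ℝ → F := fun t => f (x + t • v) - t • T v - f x
  have hg : ∀ t ∈ Icc (0 : ℝ) 1, HasDerivAt g (fderiv ℝ f (x + t • v) v - T v) t := by
    intro t ht
    have hline : HasDerivAt (fun t : ℝ => x + t • v) v t := by
      simpa using ((hasDerivAt_id t).smul_const v).const_add x
    have hlin : HasDerivAt (fun t : ℝ => t • T v) (T v) t := by
      simpa using (hasDerivAt_id t).smul_const (T v)
    exact ((((hd _ (hseg t ht)).hasFDerivAt.comp_hasDerivAt t hline).sub hlin).sub_const (f x))
  have hg_le : ∀ t ∈ Icc (0 : ℝ) 1, ‖fderiv ℝ f (x + t • v) v - T v‖ ≤ M * ‖v‖ ^ 2 * t := by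
    intro t ht
    have hT : ‖fderiv ℝ f (x + t • v) - T‖ ≤ M * (t * ‖v‖) := by
      simpa [norm_smul, abs_of_nonneg ht.1] using hlip _ (hseg t ht) _ hx
    calc ‖fderiv ℝ f (x + t • v) v - T v‖ ≤ ‖fderiv ℝ f (x + t • v) - T‖ * ‖v‖ :=
          (fderiv ℝ f (x + t • v) - T).le_opNorm v
      _ ≤ M * (t * ‖v‖) * ‖v‖ := by gcongr
      _ = M * ‖v‖ ^ 2 * t := by ring
  have hB : ∀ t : ℝ, HasDerivAt (fun s : ℝ => M / 2 * ‖v‖ ^ 2 * s ^ 2) (M * ‖v‖ ^ 2 * t) t :=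
    fun t => ((hasDerivAt_pow 2 t).const_mul (M / 2 * ‖v‖ ^ 2)).congr_deriv (by push_cast; ring)
  have hfence := image_norm_le_of_norm_deriv_right_le_deriv_boundary
    (fun t ht => (hg t ht).continuousAt.continuousWithinAt)
    (fun t ht => (hg t (Ico_subset_Icc_self ht)).hasDerivWithinAt)
    (by simp [g]) hB (fun t ht => hg_le t (Ico_subset_Icc_self ht)) (right_mem_Icc.2 zero_le_one)
  have hg1 : g 1 = f y - f x - T v := by simp only [g, v, one_smul]; abel_nf
  simpa [hg1] using hfence

theorem ContDiffOn.norm_sub_sub_fderiv_le {U : Set E} (hUo : IsOpen U) (hUc : Convex ℝ U)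
    {f : E → F} (hf : ContDiffOn ℝ 2 f U) {M : ℝ}
    (hM : ∀ u ∈ U, ‖fderiv ℝ (fderiv ℝ f) u‖ ≤ M) {x y : E} (hx : x ∈ U) (hy : y ∈ U) :
    ‖f y - f x - fderiv ℝ f x (y - x)‖ ≤ M / 2 * ‖y - x‖ ^ 2 := by
  have hd : ∀ u ∈ U, DifferentiableAt ℝ f u := fun u hu =>
    (hf.differentiableOn (by norm_num) u hu).differentiableAt (hUo.mem_nhds hu)
  have hd' : ∀ u ∈ U, DifferentiableAt ℝ (fderiv ℝ f) u := fun u hu =>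
    ((hf.fderiv_of_isOpen (m := 1) hUo (by norm_num)).differentiableOn (by norm_num) u
      hu).differentiableAt (hUo.mem_nhds hu)
  exact hUc.norm_sub_sub_fderiv_le_of_lipschitz_fderiv hd
    (fun u hu v hv => hUc.norm_image_sub_le_of_norm_fderiv_le hd' hM hv hu) hx hy

theorem norm_map_sum_smul_sub_sum_smul_map_le {ι : Type*} (s : Finset ι) {w : ι → ℝ}
    (hw₀ : ∀ i ∈ s, 0 ≤ w i) (hw₁ : ∑ i ∈ s, w i = 1) {U : Set E} (hU : Convex ℝ U)
    {p : ι → E} (hp : ∀ i ∈ s, p i ∈ U) {g : E → F} {c : E} (T : E →L[ℝ] F) {K : ℝ}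
    (hK : 0 ≤ K) (hR : ∀ u ∈ U, ‖g u - g c - T (u - c)‖ ≤ K * ‖u - c‖ ^ 2) :
    ‖g (∑ i ∈ s, w i • p i) - ∑ i ∈ s, w i • g (p i)‖ ≤
      2 * K * ∑ i ∈ s, w i * ‖p i - c‖ ^ 2 := by
  set q := ∑ i ∈ s, w i • p i
  set R : E → F := fun u => g u - g c - T (u - c)
  set V := ∑ i ∈ s, w i * ‖p i - c‖ ^ 2
  have hcenter : ∑ i ∈ s, w i • (p i - c) = q - c := by
    simp only [q, smul_sub, sum_sub_distrib, ← sum_smul, hw₁, one_smul]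
  have hsplit : g q - ∑ i ∈ s, w i • g (p i) = R q - ∑ i ∈ s, w i • R (p i) := by
    have hT : ∑ i ∈ s, w i • T (p i - c) = T (q - c) := by
      rw [← hcenter, map_sum]; simp only [map_smul]
    simp only [R, smul_sub, sum_sub_distrib, hT, ← sum_smul, hw₁, one_smul]
    abel
  have hRq : ‖R q‖ ≤ K * V :=
    (hR q (hU.sum_mem hw₀ hw₁ hp)).trans (by gcongr; exact norm_sum_smul_sub_sq_le s p c hw₀ hw₁)
  have hRp : ‖∑ i ∈ s, w i • R (p i)‖ ≤ K * V := by
    refine (norm_sum_le _ _).trans ?_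
    rw [mul_sum]
    refine sum_le_sum fun i hi => ?_
    rw [norm_smul, Real.norm_of_nonneg (hw₀ i hi)]
    calc w i * ‖R (p i)‖ ≤ w i * (K * ‖p i - c‖ ^ 2) := by gcongr; exacts [hw₀ i hi, hR _ (hp i hi)]
      _ = K * (w i * ‖p i - c‖ ^ 2) := by ring
  rw [hsplit]
  linarith [norm_sub_le (R q) (∑ i ∈ s, w i • R (p i))]

end

/-- If the loss `ℓ : F × Y → ℝ` is `L`-Lipschitz in its first argument,
then for every input `x` and label `y`, the loss gap between the global-parameter
predictor `f θ_g` and the prediction-averaged ensemble `Σ_a γ_a f (θ a)` satisfies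
`|ℓ(f θ_g x, y) - ℓ(Σ_a γ_a f (θ a) x, y)| ≤ L·M·Σ_a γ_a ‖θ a - θ̄‖²`. -/
theorem loss_gap_global_vs_ensemble
    {E : Type*} [NormedAddCommGroup E] [NormedSpace ℝ E]
    {F : Type*} [NormedAddCommGroup F] [NormedSpace ℝ F]
    {X Y : Type*}
    (U : Set E) (hUopen : IsOpen U) (hUconv : Convex ℝ U)
    (f : E → X → F)
    (hf : ∀ x : X, ContDiffOn ℝ 2 (fun ϑ => f ϑ x) U)
    (M : ℝ)
    (hM : ∀ x : X, ∀ ϑ ∈ U, ‖fderiv ℝ (fderiv ℝ (fun ϑ' => f ϑ' x)) ϑ‖ ≤ M)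
    (ℓ : F → Y → ℝ) (L : ℝ) (hL : 0 ≤ L)
    (hLips : ∀ (y : Y) (u v : F), |ℓ u y - ℓ v y| ≤ L * ‖u - v‖)
    (n : ℕ) (γ : Fin n → ℝ) (hγ : ∀ a, 0 ≤ γ a) (hγsum : ∑ a, γ a = 1)
    (θbar : E) (hθbar : θbar ∈ U)
    (θ : Fin n → E) (hθ : ∀ a, θ a ∈ U) :
    ∀ (x : X) (y : Y),
      |ℓ (f (∑ a, γ a • θ a) x) y - ℓ (∑ a, γ a • f (θ a) x) y| ≤
        L * M * ∑ a, γ a * ‖θ a - θbar‖ ^ 2 := by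
  intro x y
  have hM₀ : 0 ≤ M := (norm_nonneg (fderiv ℝ (fderiv ℝ fun ϑ => f ϑ x) θbar)).trans (hM x θbar hθbar)
  have hgap := norm_map_sum_smul_sub_sum_smul_map_le univ (fun a _ => hγ a) hγsum hUconv
    (fun a _ => hθ a) (fderiv ℝ (fun ϑ => f ϑ x) θbar) (by positivity)
    (fun u hu => (hf x).norm_sub_sub_fderiv_le hUopen hUconv (hM x) hθbar hu)
  calc |ℓ (f (∑ a, γ a • θ a) x) y - ℓ (∑ a, γ a • f (θ a) x) y|
      ≤ L * ‖f (∑ a, γ a • θ a) x - ∑ a, γ a • f (θ a) x‖ := hLips y _ _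
    _ ≤ L * (2 * (M / 2) * ∑ a, γ a * ‖θ a - θbar‖ ^ 2) := by gcongr
    _ = L * M * ∑ a, γ a * ‖θ a - θbar‖ ^ 2 := by ring
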